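/- Let R be a non-noetherian archimedean valuation ring that is an IF-ring with maximal ideal P, and let E be a nonzero fp-injective R-module with ν(E) ≤ n, where ν(E) is the supremum of the minimal numbers of generators of finitely generated submodules of E. Then there exists a nonzero uniserial pure submodule U of E such that ν(E/U) ≤ n − 1. -/

import Mathlib

open IsLocalRing

universe u

/-- A chain (valuation) ring: ideals are totally ordered by inclusion. -/
def IsChainRing (R : Type u) [CommRing R] : Prop := ∀ I J : Ideal R, I ≤ J ∨ J ≤ I

/-- Archimedean: the maximal ideal is the only nonzero prime ideal. -/
def IsArchimedeanLocal (R : Type u) [CommRing R] [IsLocalRing R] : Prop :=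
  ∀ Q : Ideal R, Q.IsPrime → Q ≠ ⊥ → Q = maximalIdeal R

/-- The annihilator ideal `(0 : x)` of a module element. -/
def annOf (R : Type u) {M : Type u} [CommRing R] [AddCommGroup M] [Module R M] (x : M) :
    Ideal R := LinearMap.ker (LinearMap.toSpanSingleton R M x)

/-- fp-injective (absolutely pure): every homomorphism from a finitely generated
submodule of a finite free module extends; equivalently `Ext¹(F, M) = 0` for every
finitely presented `F`. -/
def IsFpInjective (R M : Type u) [CommRing R] [AddCommGroup M] [Module R M] : Prop :=
  ∀ (n : ℕ) (K : Submodule R (Fin n → R)), K.FG →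
    ∀ g : K →ₗ[R] M, ∃ h : (Fin n → R) →ₗ[R] M, ∀ x : K, h x = g x

/-- A coherent ring: every finitely generated ideal is finitely presented. -/
def IsCoherentRing (R : Type u) [CommRing R] : Prop :=
  ∀ I : Ideal R, I.FG → Module.FinitePresentation R ↥I

/-- An IF-ring: coherent and self fp-injective. -/
def IsIFRing (R : Type u) [CommRing R] : Prop := IsCoherentRing R ∧ IsFpInjective R R

/-- Purity of a submodule: `I·M ⊓ X = I·X` for every finitely generated ideal `I`. -/
def IsPureSubmodule {R M : Type u} [CommRing R] [AddCommGroup M] [Module R M]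
    (X : Submodule R M) : Prop :=
  ∀ I : Ideal R, I.FG → (I • (⊤ : Submodule R M)) ⊓ X = I • X

/-- A submodule is uniserial if its submodules are totally ordered by inclusion. -/
def IsUniserialSub {R M : Type u} [CommRing R] [AddCommGroup M] [Module R M]
    (U : Submodule R M) : Prop :=
  ∀ V W : Submodule R M, V ≤ U → W ≤ U → V ≤ W ∨ W ≤ V

/-- A uniserial module: submodules are totally ordered by inclusion. -/
def IsUniserialMod (R M : Type u) [CommRing R] [AddCommGroup M] [Module R M] : Prop :=
  ∀ V W : Submodule R M, V ≤ W ∨ W ≤ V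

/-- A faithful submodule: only `0` annihilates all its elements. -/
def IsFaithfulSub {R M : Type u} [CommRing R] [AddCommGroup M] [Module R M]
    (U : Submodule R M) : Prop := ∀ r : R, (∀ x ∈ U, r • x = 0) → r = 0

/-- A faithful module: its annihilator is zero. -/
def IsFaithfulMod (R M : Type u) [CommRing R] [AddCommGroup M] [Module R M] : Prop :=
  ∀ r : R, (∀ x : M, r • x = 0) → r = 0

/-- `μ(M)`: the minimal number of generators of a module. -/
noncomputable def mu (R M : Type u) [CommRing R] [AddCommGroup M] [Module R M] : ℕ :=
  sInf {n : ℕ | ∃ s : Finset M, s.card = n ∧ Submodule.span R (s : Set M) = ⊤}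

/-- A maximal ring: every family of cosets of ideals with the finite intersection
property has nonempty total intersection. -/
def IsMaximalRing (R : Type u) [CommRing R] : Prop :=
  ∀ (ι : Type u) (a : ι → R) (A : ι → Ideal R),
    (∀ s : Finset ι, ∃ x : R, ∀ i ∈ s, x - a i ∈ A i) → ∃ x : R, ∀ i, x - a i ∈ A i

/-- Almost maximal: `R/A` is maximal for every nonzero ideal `A`. -/
def IsAlmostMaximalRing (R : Type u) [CommRing R] : Prop :=
  ∀ A : Ideal R, A ≠ ⊥ → IsMaximalRing (R ⧸ A)

/-- A uniform module: any two nonzero submodules intersect nontrivially. -/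
def IsUniformMod (R M : Type u) [CommRing R] [AddCommGroup M] [Module R M] : Prop :=
  ∀ N₁ N₂ : Submodule R M, N₁ ≠ ⊥ → N₂ ≠ ⊥ → N₁ ⊓ N₂ ≠ ⊥

/-- Bounded module type with bound `n`: every finitely generated module is a direct
sum of submodules each generated by at most `n` elements. -/
def HasBoundedModuleType (R : Type u) [CommRing R] (n : ℕ) : Prop :=
  ∀ (M : Type u) [AddCommGroup M] [Module R M], Module.Finite R M →
    ∃ (ι : Type u) (N : ι → Submodule R M),
      iSupIndep N ∧ (⨆ i, N i) = ⊤ ∧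
      ∀ i, ∃ s : Finset M, s.card ≤ n ∧ Submodule.span R (s : Set M) = N i


/-!
In an IF chain ring every annihilator is principal, `ann a = (δ a)`, and self fp-injectivity
gives back `ann (δ a) = (a)`. If some `x₀ ≠ 0` has a principal annihilator `(c)`, fp-injectivity
of `E` lets us write `x₀ = δ c • y`, and then `ann y = 0`, so `U = R y` works. Otherwise, since
`R` is archimedean and not noetherian, `𝔪` is not principal and contains a sequence
`d₀, d₁, …` coinitial for divisibility; dividing in the same way again and again gives a chain
`R x₀ ≤ R x₁ ≤ ⋯` with `dₘ · ann xₘ₊₁ = 0`, and `U = ⋃ R xₘ` works. In both cases `U` is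
uniserial (a directed union of cyclic modules over a chain ring), pure (elements of `U` killed by
`b` lie in `ann b · U`), and not contained in `𝔪 G` for any finitely generated `G`. The last
property lets an element of `U` join a minimal generating set of a lift of any finitely
generated submodule of `E ⧸ U`, where it dies, so one generator fewer is needed there.
-/

open Filter

theorem IsChainRing.preValuationRing {R : Type*} [CommRing R] (h : IsChainRing R) :
    PreValuationRing R :=
  PreValuationRing.iff_ideal_total.2 ⟨h⟩

theorem mem_annOf {R M : Type u} [CommRing R] [AddCommGroup M] [Module R M] {x : M} {r : R} :
    r ∈ annOf R x ↔ r • x = 0 := by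
  simp [annOf]

namespace PreValuationRing

variable {R : Type*} [CommRing R] [PreValuationRing R]

instance : IsBezout R :=
  IsBezout.iff_span_pair_isPrincipal.2 fun x y => by
    rcases ValuationRing.dvd_total x y with h | h
    · exact ⟨x, Ideal.span_pair_eq_span_left_iff_dvd.2 h⟩
    · exact ⟨y, Ideal.span_pair_eq_span_right_iff_dvd.2 h⟩

theorem exists_eq_span_singleton_of_fg {I : Ideal R} (hI : I.FG) : ∃ a, I = Ideal.span {a} :=
  (IsBezout.isPrincipal_of_FG I hI).principal

end PreValuationRing

theorem IsLocalRing.eq_zero_of_eq_mul {R : Type*} [CommRing R] [IsLocalRing R] {a e : R}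
    (he : e ∈ maximalIdeal R) (h : a = e * a) : a = 0 := by
  have hu : IsUnit (1 - e) := isUnit_one_sub_self_of_mem_nonunits e he
  exact hu.mul_right_eq_zero.1 (by rw [sub_mul, one_mul, ← h, sub_self])

section Archimedean

variable {R : Type u} [CommRing R] [IsLocalRing R] [PreValuationRing R]

theorem isPrime_iInf_span_pow {e : R} (he : e ∈ maximalIdeal R) (hnil : ¬ IsNilpotent e) :
    (⨅ n : ℕ, Ideal.span {e ^ n}).IsPrime := by
  have mem : ∀ w, w ∈ (⨅ n : ℕ, Ideal.span {e ^ n}) ↔ ∀ n, e ^ n ∣ w := fun w => by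
    simp only [Submodule.mem_iInf, Ideal.mem_span_singleton]
  refine ⟨fun htop => ?_, fun {x y} hxy => ?_⟩
  · exact he (isUnit_of_dvd_one (by simpa using (mem 1).1 (htop ▸ Submodule.mem_top) 1))
  · by_contra! h
    simp only [mem, not_forall] at h hxy
    obtain ⟨⟨i, hi⟩, ⟨j, hj⟩⟩ := h
    have hxy_dvd : x * y ∣ e ^ (i + j) := by
      rw [pow_add]
      exact mul_dvd_mul ((ValuationRing.dvd_total _ x).resolve_left hi)
        ((ValuationRing.dvd_total _ y).resolve_left hj)
    obtain ⟨t, ht⟩ := (hxy (i + j + 1)).trans hxy_dvd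
    refine hnil ⟨i + j, eq_zero_of_eq_mul (Ideal.mul_mem_right t _ he) ?_⟩
    rw [pow_succ] at ht
    linear_combination ht

namespace IsArchimedeanLocal

theorem eq_zero_of_forall_pow_dvd (harch : IsArchimedeanLocal R) {e z : R}
    (he : e ∈ maximalIdeal R) (h : ∀ n : ℕ, e ^ n ∣ z) : z = 0 := by
  by_cases hnil : IsNilpotent e
  · obtain ⟨N, hN⟩ := hnil
    exact zero_dvd_iff.1 (hN ▸ h N)
  by_contra hz
  have hmem : ∀ w, w ∈ (⨅ n : ℕ, Ideal.span {e ^ n}) ↔ ∀ n, e ^ n ∣ w := fun w => by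
    simp only [Submodule.mem_iInf, Ideal.mem_span_singleton]
  have hQ := harch _ (isPrime_iInf_span_pow he hnil)
    (fun hQ => hz (by rw [← Submodule.mem_bot R, ← hQ, hmem]; exact h))
  obtain ⟨t, ht⟩ := (hmem e).1 (hQ ▸ he) 2
  refine hnil ⟨1, eq_zero_of_eq_mul (Ideal.mul_mem_right t _ he) ?_⟩
  rw [pow_one]
  linear_combination ht

theorem exists_associated_pow (harch : IsArchimedeanLocal R) {p : R}
    (hp : maximalIdeal R = Ideal.span {p}) {z : R} (hz : z ≠ 0) :
    ∃ k : ℕ, Associated (p ^ k) z := by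
  have hpP : p ∈ maximalIdeal R := hp ▸ Ideal.mem_span_singleton_self p
  have hfin : FiniteMultiplicity p z := by
    by_contra hinf
    exact hz (harch.eq_zero_of_forall_pow_dvd hpP (FiniteMultiplicity.not_iff_forall.1 hinf))
  obtain ⟨u, hu⟩ := pow_multiplicity_dvd p z
  have hunit : IsUnit u := by
    by_contra hu'
    obtain ⟨t, rfl⟩ := Ideal.mem_span_singleton.1 (hp ▸ (mem_maximalIdeal u).2 hu')
    exact hfin.not_pow_dvd_of_multiplicity_lt (lt_add_one _) ⟨t, by linear_combination hu⟩
  exact ⟨_, hunit.unit, hu.symm⟩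

theorem isNoetherianRing_of_maximalIdeal_eq_span (harch : IsArchimedeanLocal R) {p : R}
    (hp : maximalIdeal R = Ideal.span {p}) : IsNoetherianRing R := by
  classical
  suffices IsPrincipalIdealRing R by infer_instance
  refine ⟨fun I => ?_⟩
  by_cases hI : I = ⊥
  · exact hI ▸ bot_isPrincipal
  have hex : ∃ k, p ^ k ∈ I := by
    obtain ⟨z, hzI, hz0⟩ := Submodule.exists_mem_ne_zero_of_ne_bot hI
    obtain ⟨k, hk⟩ := harch.exists_associated_pow hp hz0
    exact ⟨k, Ideal.mem_of_dvd _ hk.symm.dvd hzI⟩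
  refine ⟨p ^ Nat.find hex, le_antisymm (fun w hw => ?_)
    ((Ideal.span_singleton_le_iff_mem _).2 (Nat.find_spec hex))⟩
  rw [Ideal.submodule_span_eq, Ideal.mem_span_singleton]
  rcases eq_or_ne w 0 with rfl | hw0
  · exact dvd_zero _
  obtain ⟨k, hk⟩ := harch.exists_associated_pow hp hw0
  exact (pow_dvd_pow p (Nat.find_min' hex (Ideal.mem_of_dvd _ hk.symm.dvd hw))).trans hk.dvd

theorem exists_sq_dvd (harch : IsArchimedeanLocal R) (hnoeth : ¬ IsNoetherianRing R) {e : R}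
    (he : e ∈ maximalIdeal R) : ∃ f ∈ maximalIdeal R, f ≠ 0 ∧ f ^ 2 ∣ e := by
  have hnle : ¬ maximalIdeal R ≤ Ideal.span {e} := fun hle => hnoeth
    (harch.isNoetherianRing_of_maximalIdeal_eq_span
      (le_antisymm hle ((Ideal.span_singleton_le_iff_mem _).2 he)))
  obtain ⟨b, hbP, hbe⟩ := SetLike.not_le_iff_exists.1 hnle
  obtain ⟨c, rfl⟩ : b ∣ e := (ValuationRing.dvd_total e b).resolve_left
    (fun h => hbe (Ideal.mem_span_singleton.2 h))
  have hb0 : b ≠ 0 := by rintro rfl; exact hbe (zero_mem _)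
  have hcP : c ∈ maximalIdeal R := by
    by_contra hc
    exact hbe (Ideal.mem_span_singleton.2
      (((mem_maximalIdeal c).not.1 hc |> not_not.1).mul_right_dvd.2 dvd_rfl))
  rcases ValuationRing.dvd_total b c with ⟨t, rfl⟩ | ⟨t, rfl⟩
  · exact ⟨b, hbP, hb0, t, by ring⟩
  · exact ⟨c, hcP, by rintro rfl; simp at hb0, t, by ring⟩

theorem exists_coinitial_seq (harch : IsArchimedeanLocal R) (hnoeth : ¬ IsNoetherianRing R) :
    ∃ d : ℕ → R, (∀ j, d j ∈ maximalIdeal R ∧ d j ≠ 0) ∧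
      ∀ e ∈ maximalIdeal R, ∃ j, d j ∣ e := by
  choose f hfP hf0 hfdvd using fun e : maximalIdeal R => harch.exists_sq_dvd hnoeth e.2
  let g : maximalIdeal R → maximalIdeal R := fun e => ⟨f e, hfP e⟩
  let d : ℕ → R := fun j => g^[j + 1] 0
  have hd0 : ∀ j, d j ≠ 0 := fun j => by
    simp only [d, Function.iterate_succ_apply']
    exact hf0 _
  have hsq : ∀ j, d (j + 1) ^ 2 ∣ d j := fun j => by
    simp only [d, Function.iterate_succ_apply' g (j + 1)]
    exact hfdvd _
  refine ⟨d, fun j => ⟨(g^[j + 1] 0).2, hd0 j⟩, fun e heP => ?_⟩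
  by_contra! hnd
  have hpow : ∀ j, d j ^ 2 ^ j ∣ d 0 := by
    intro j
    induction j with
    | zero => simp
    | succ j ih =>
      calc d (j + 1) ^ 2 ^ (j + 1) = (d (j + 1) ^ 2) ^ 2 ^ j := by
            rw [← pow_mul, pow_succ, mul_comm]
        _ ∣ d j ^ 2 ^ j := pow_dvd_pow_of_dvd (hsq j) _
        _ ∣ d 0 := ih
  refine hd0 0 (harch.eq_zero_of_forall_pow_dvd heP fun n => ?_)
  calc e ^ n ∣ e ^ 2 ^ n := pow_dvd_pow e Nat.lt_two_pow_self.le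
    _ ∣ d n ^ 2 ^ n := pow_dvd_pow_of_dvd ((ValuationRing.dvd_total _ e).resolve_left (hnd n)) _
    _ ∣ d 0 := hpow n

theorem exists_mem_forall_dvd_mul (harch : IsArchimedeanLocal R) {d : R}
    (hd : d ∈ maximalIdeal R) (A : Ideal R) : ∃ c ∈ A, ∀ z ∈ A, c ∣ d * z := by
  by_contra! hcon
  have key : ∀ n : ℕ, ∀ c ∈ A, d ^ n ∣ c := by
    intro n
    induction n with
    | zero => exact fun c _ => by simp
    | succ m ih =>
      intro c hc
      rcases eq_or_ne c 0 with rfl | hc0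
      · exact dvd_zero _
      obtain ⟨z, hz, hndvd⟩ := hcon c hc
      obtain ⟨t, rfl⟩ := (ValuationRing.dvd_total c (d * z)).resolve_left hndvd
      rw [pow_succ', mul_assoc]
      exact mul_dvd_mul_left d (ih _ (A.mul_mem_right t hz))
  obtain ⟨z, hz, hndvd⟩ := hcon 0 A.zero_mem
  rw [harch.eq_zero_of_forall_pow_dvd hd fun n => key n z hz, mul_zero] at hndvd
  exact hndvd dvd_rfl

end IsArchimedeanLocal

end Archimedean

theorem exists_smul_eq_of_isFpInjective {R M : Type u} [CommRing R] [AddCommGroup M]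
    [Module R M] (hM : IsFpInjective R M) {a : R} {x : M}
    (h : ∀ z : R, z * a = 0 → z • x = 0) : ∃ y : M, a • y = x := by
  let v : Fin 1 → R := fun _ => a
  let g := LinearPMap.mkSpanSingleton' (σ := RingHom.id R) v x
    fun c hc => h c (by simpa [v] using congrFun hc 0)
  obtain ⟨f, hf⟩ := hM 1 g.domain (Submodule.fg_span_singleton v) g.toFun
  refine ⟨f fun _ => 1, ?_⟩
  calc a • f (fun _ => 1) = f v := by
        rw [← map_smul]
        congr 1
        funext
        simp [v]
    _ = x := (hf ⟨v, Submodule.mem_span_singleton_self v⟩).trans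
        (LinearPMap.mkSpanSingleton'_apply_self _ _ _ _)

theorem IsCoherentRing.fg_annOf {R : Type u} [CommRing R] (hR : IsCoherentRing R) (a : R) :
    (annOf R a).FG := by
  let f := LinearMap.toSpanSingleton R R a
  have : Module.FinitePresentation R (LinearMap.range f) :=
    hR _ (LinearMap.span_singleton_eq_range R R a ▸ Submodule.fg_span_singleton a)
  have hfg := Module.FinitePresentation.fg_ker _ f.surjective_rangeRestrict
  rwa [f.ker_rangeRestrict] at hfg

section Duality

variable {R : Type u} [CommRing R]

theorem exists_annOf_eq_span [PreValuationRing R] (hR : IsCoherentRing R) :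
    ∃ δ : R → R, ∀ a, annOf R a = Ideal.span {δ a} :=
  ⟨_, fun a => (PreValuationRing.exists_eq_span_singleton_of_fg (hR.fg_annOf a)).choose_spec⟩

variable {δ : R → R}

theorem dual_mul_self (hδ : ∀ a, annOf R a = Ideal.span {δ a}) (a : R) : δ a * a = 0 :=
  mem_annOf.1 (hδ a ▸ Ideal.mem_span_singleton_self (δ a))

theorem eq_zero_of_isUnit_dual (hδ : ∀ a, annOf R a = Ideal.span {δ a}) {a : R}
    (ha : IsUnit (δ a)) : a = 0 := by
  simpa using dual_mul_self hδ a |> ha.mul_right_eq_zero.1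

theorem dvd_of_mul_dual_eq_zero (hδ : ∀ a, annOf R a = Ideal.span {δ a})
    (hR : IsFpInjective R R) {a z : R} (hz : z * δ a = 0) : a ∣ z := by
  obtain ⟨y, rfl⟩ := exists_smul_eq_of_isFpInjective hR (a := a) (x := z) fun w hw => by
    obtain ⟨t, rfl⟩ := Ideal.mem_span_singleton'.1 (hδ a ▸ mem_annOf.2 hw)
    rw [smul_eq_mul]
    linear_combination t * hz
  exact dvd_mul_right a y

theorem isUnit_of_dual_eq_zero (hδ : ∀ a, annOf R a = Ideal.span {δ a})
    (hR : IsFpInjective R R) {a : R} (ha : δ a = 0) : IsUnit a :=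
  isUnit_of_dvd_one (dvd_of_mul_dual_eq_zero hδ hR (by rw [ha, mul_zero]))

theorem exists_dual_smul_eq {E : Type u} [AddCommGroup E] [Module R E] (hE : IsFpInjective R E)
    (hδ : ∀ a, annOf R a = Ideal.span {δ a}) (hR : IsFpInjective R R) {c : R} {x : E}
    (hcx : c • x = 0) : ∃ y : E, δ c • y = x :=
  exists_smul_eq_of_isFpInjective hE fun z hz => by
    obtain ⟨t, rfl⟩ := dvd_of_mul_dual_eq_zero hδ hR hz
    rw [mul_comm, mul_smul, hcx, smul_zero]

theorem eq_zero_of_forall_mem_maximalIdeal_mul_eq_zero [IsLocalRing R] [PreValuationRing R]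
    (harch : IsArchimedeanLocal R) (hnoeth : ¬ IsNoetherianRing R)
    (hδ : ∀ a, annOf R a = Ideal.span {δ a}) {β : R}
    (h : ∀ e ∈ maximalIdeal R, β * e = 0) : β = 0 := by
  by_contra hβ
  have hle : maximalIdeal R ≤ Ideal.span {δ β} := fun e he =>
    hδ β ▸ mem_annOf.2 (by rw [smul_eq_mul, mul_comm, h e he])
  have hδP : δ β ∈ maximalIdeal R :=
    (mem_maximalIdeal _).2 fun hu => hβ (eq_zero_of_isUnit_dual hδ hu)
  exact hnoeth (harch.isNoetherianRing_of_maximalIdeal_eq_span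
    (le_antisymm hle ((Ideal.span_singleton_le_iff_mem _).2 hδP)))

end Duality

section NumberOfGenerators

variable {R M : Type u} [CommRing R] [AddCommGroup M] [Module R M]

theorem exists_finset_span_eq_top {N : Submodule R M} {s : Finset M}
    (hs : Submodule.span R (s : Set M) = N) :
    ∃ t : Finset N, t.card ≤ s.card ∧ Submodule.span R (t : Set N) = ⊤ := by
  classical
  subst hs
  refine ⟨s.subtype (· ∈ Submodule.span R (s : Set M)),
    (Finset.card_subtype _ _).trans_le (Finset.card_filter_le _ _), ?_⟩
  convert Submodule.span_span_coe_preimage (R := R) (s := (s : Set M))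
  ext
  simp

theorem mu_le_card {N : Submodule R M} {s : Finset M} (hs : Submodule.span R (s : Set M) = N) :
    mu R N ≤ s.card := by
  obtain ⟨t, hts, ht⟩ := exists_finset_span_eq_top hs
  refine le_trans (Nat.sInf_le ?_) hts
  exact ⟨t, rfl, ht⟩

theorem exists_finset_card_eq_mu {N : Submodule R M} (hN : N.FG) :
    ∃ s : Finset M, s.card = mu R N ∧ Submodule.span R (s : Set M) = N := by
  obtain ⟨s₀, hs₀⟩ := hN
  obtain ⟨t₀, -, ht₀⟩ := exists_finset_span_eq_top hs₀
  obtain ⟨t, htc, hts⟩ := Nat.sInf_mem (⟨_, t₀, rfl, ht₀⟩ : {k | ∃ t : Finset N, t.card = k ∧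
    Submodule.span R (t : Set N) = ⊤}.Nonempty)
  refine ⟨t.map (Function.Embedding.subtype _), by rw [Finset.card_map]; exact htc, ?_⟩
  rw [Finset.coe_map, Function.Embedding.coe_subtype, ← N.coe_subtype, Submodule.span_image, hts,
    Submodule.map_top, Submodule.range_subtype]

theorem Submodule.FG.exists_fg_map_eq {M' : Type*} [AddCommGroup M'] [Module R M']
    {f : M →ₗ[R] M'} (hf : Function.Surjective f) {N : Submodule R M'} (hN : N.FG) :
    ∃ G : Submodule R M, G.FG ∧ G.map f = N := by
  classical
  obtain ⟨t, rfl⟩ := hN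
  refine ⟨Submodule.span R (t.image (Function.surjInv hf)), ⟨_, rfl⟩, ?_⟩
  rw [Submodule.map_span, Finset.coe_image, Set.image_image]
  simp only [Function.surjInv_eq hf, Set.image_id']

variable [IsLocalRing R]

theorem notMem_smul_sup_span_singleton {G : Submodule R M} {u : M}
    (hu : u ∉ maximalIdeal R • G) : u ∉ maximalIdeal R • (G ⊔ R ∙ u) := by
  rw [Submodule.smul_sup]
  intro h
  obtain ⟨v, hv, w, hw, hvw⟩ := Submodule.mem_sup.1 h
  obtain ⟨q, hq, rfl⟩ := Submodule.mem_smul_span_singleton.1 hw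
  obtain ⟨r, hr⟩ := (isUnit_one_sub_self_of_mem_nonunits q hq).exists_left_inv
  have hv' : v = (1 - q) • u := by
    rw [sub_smul, one_smul, eq_sub_iff_add_eq, hvw]
  refine hu ?_
  rw [← one_smul R u, ← hr, mul_smul, ← hv']
  exact Submodule.smul_mem _ r hv

theorem exists_mem_span_le_span_insert_erase [DecidableEq M] {s : Finset M} {u : M}
    (hu : u ∈ Submodule.span R (s : Set M))
    (hu' : u ∉ maximalIdeal R • Submodule.span R (s : Set M)) :
    ∃ g ∈ s, Submodule.span R (s : Set M) ≤ Submodule.span R (insert u ↑(s.erase g)) := by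
  obtain ⟨f, -, hf⟩ := Submodule.mem_span_finset.1 hu
  obtain ⟨g, hg, hfg⟩ : ∃ g ∈ s, IsUnit (f g) := by
    by_contra! h
    exact hu' (hf ▸ Submodule.sum_mem _ fun i hi => Submodule.smul_mem_smul
      ((mem_maximalIdeal _).2 (h i hi)) (Submodule.subset_span hi))
  refine ⟨g, hg, Submodule.span_le.2 fun i hi => ?_⟩
  rcases eq_or_ne i g with rfl | hne
  · have hi' : f i • i = u - ∑ j ∈ s.erase i, f j • j := by
      rw [← hf, ← Finset.add_sum_erase s _ hi, add_sub_cancel_right]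
    obtain ⟨r, hr⟩ := hfg.exists_left_inv
    have hmem : r • (u - ∑ j ∈ s.erase i, f j • j) ∈ Submodule.span R (insert u ↑(s.erase i)) :=
      Submodule.smul_mem _ r (Submodule.sub_mem _
        (Submodule.subset_span (Set.mem_insert _ _)) (Submodule.sum_mem _ fun j hj =>
          Submodule.smul_mem _ _ (Submodule.subset_span (Set.mem_insert_of_mem u hj))))
    rwa [← hi', smul_smul, hr, one_smul] at hmem
  · exact Submodule.subset_span (Set.mem_insert_of_mem _ (Finset.mem_erase.2 ⟨hne, hi⟩))

theorem mu_quotient_le_sub_one {n : ℕ} (hn : ∀ N : Submodule R M, N.FG → mu R N ≤ n)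
    {U : Submodule R M} (hU : ∀ G : Submodule R M, G.FG → ¬ U ≤ maximalIdeal R • G)
    (N : Submodule R (M ⧸ U)) (hN : N.FG) : mu R N ≤ n - 1 := by
  classical
  obtain ⟨G, hGfg, rfl⟩ := hN.exists_fg_map_eq U.mkQ_surjective
  obtain ⟨u, huU, hu⟩ := SetLike.not_le_iff_exists.1 (hU G hGfg)
  have hHfg := hGfg.sup (Submodule.fg_span_singleton u)
  obtain ⟨s, hs, hsH⟩ := exists_finset_card_eq_mu hHfg
  obtain ⟨g, hg, hle⟩ := exists_mem_span_le_span_insert_erase (u := u)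
    (hsH ▸ Submodule.mem_sup_right (Submodule.mem_span_singleton_self u))
    (hsH ▸ notMem_smul_sup_span_singleton hu)
  have hmkQu : U.mkQ u = 0 := (Submodule.Quotient.mk_eq_zero U).2 huU
  have hspan : G.map U.mkQ = Submodule.span R ↑((s.erase g).image U.mkQ) := by
    have hHG : (G ⊔ R ∙ u).map U.mkQ = G.map U.mkQ := by
      rw [Submodule.map_sup, Submodule.map_span, Set.image_singleton, hmkQu,
        Submodule.span_zero_singleton, sup_bot_eq]
    refine le_antisymm ?_ ?_
    · rw [← hHG, ← hsH]
      refine (Submodule.map_mono hle).trans_eq ?_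
      rw [Submodule.map_span, Set.image_insert_eq, hmkQu, Submodule.span_insert_zero,
        Finset.coe_image]
    · rw [← hHG, ← hsH, Finset.coe_image, ← Submodule.map_span]
      exact Submodule.map_mono (Submodule.span_mono (Finset.coe_subset.2 (Finset.erase_subset _ _)))
  calc mu R (G.map U.mkQ) ≤ ((s.erase g).image U.mkQ).card := mu_le_card hspan.symm
    _ ≤ (s.erase g).card := Finset.card_image_le
    _ = s.card - 1 := Finset.card_erase_of_mem hg
    _ ≤ n - 1 := by rw [hs]; exact Nat.sub_le_sub_right (hn _ hHfg) 1

end NumberOfGenerators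

section ChainModules

variable {R M : Type u} [CommRing R] [PreValuationRing R] [AddCommGroup M] [Module R M]

theorem isUniserialSub_of_forall_mem_span_singleton {U : Submodule R M}
    (hU : ∀ u ∈ U, ∀ v ∈ U, ∃ x : M, u ∈ R ∙ x ∧ v ∈ R ∙ x) : IsUniserialSub U := by
  intro V W hV hW
  by_contra! h
  obtain ⟨v, hvV, hvW⟩ := SetLike.not_le_iff_exists.1 h.1
  obtain ⟨w, hwW, hwV⟩ := SetLike.not_le_iff_exists.1 h.2
  obtain ⟨x, hv, hw⟩ := hU v (hV hvV) w (hW hwW)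
  obtain ⟨r, rfl⟩ := Submodule.mem_span_singleton.1 hv
  obtain ⟨s, rfl⟩ := Submodule.mem_span_singleton.1 hw
  rcases ValuationRing.dvd_total r s with ⟨t, rfl⟩ | ⟨t, rfl⟩
  · exact hwV (by rw [mul_comm, mul_smul]; exact V.smul_mem t hvV)
  · exact hvW (by rw [mul_comm, mul_smul]; exact W.smul_mem t hwW)

theorem isPureSubmodule_of_forall_smul_mem {U : Submodule R M}
    (hU : ∀ (a : R) (e : M), a • e ∈ U → ∃ u ∈ U, a • e = a • u) : IsPureSubmodule U := by
  intro I hI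
  obtain ⟨a, rfl⟩ := PreValuationRing.exists_eq_span_singleton_of_fg hI
  refine le_antisymm (fun z hz => ?_) (le_inf (Submodule.smul_mono le_rfl le_top)
    Submodule.smul_le_right)
  obtain ⟨hz, hzU⟩ := Submodule.mem_inf.1 hz
  rw [Submodule.ideal_span_singleton_smul, Submodule.mem_smul_pointwise_iff_exists] at hz
  obtain ⟨e, -, rfl⟩ := hz
  obtain ⟨u, hu, he⟩ := hU a e hzU
  rw [he]
  exact Submodule.smul_mem_smul (Ideal.mem_span_singleton_self a) hu

theorem isPureSubmodule_of_forall_smul_eq_zero {δ : R → R}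
    (hδ : ∀ a, annOf R a = Ideal.span {δ a}) (hR : IsFpInjective R R) {U : Submodule R M}
    (hU : ∀ b : R, ∀ z ∈ U, b • z = 0 → ∃ s : R, b * s = 0 ∧ ∃ u ∈ U, z = s • u) :
    IsPureSubmodule U := by
  refine isPureSubmodule_of_forall_smul_mem fun a e hae => ?_
  obtain ⟨s, hs, u, hu, hsu⟩ := hU (δ a) _ hae (by rw [smul_smul, dual_mul_self hδ, zero_smul])
  obtain ⟨t, rfl⟩ := dvd_of_mul_dual_eq_zero hδ hR (a := a) (z := s) (by rw [mul_comm, hs])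
  exact ⟨t • u, U.smul_mem t hu, by rw [hsu, smul_smul]⟩

theorem exists_eq_smul_of_mem_smul {I : Ideal R} {N : Submodule R M} {x : M} (hx : x ∈ I • N) :
    ∃ a ∈ I, ∃ y ∈ N, x = a • y := by
  refine Submodule.smul_induction_on hx (fun a ha y hy => ⟨a, ha, y, hy, rfl⟩) ?_
  rintro _ _ ⟨a, ha, y, hy, rfl⟩ ⟨b, hb, z, hz, rfl⟩
  rcases ValuationRing.dvd_total a b with ⟨t, rfl⟩ | ⟨t, rfl⟩
  · exact ⟨a, ha, y + t • z, N.add_mem hy (N.smul_mem t hz), by rw [smul_add, smul_smul]⟩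
  · exact ⟨b, hb, t • y + z, N.add_mem (N.smul_mem t hy) hz, by rw [smul_add, smul_smul]⟩

theorem annihilator_ne_bot_of_fg (h : ∀ x : M, ∃ β : R, β ≠ 0 ∧ β • x = 0)
    {G : Submodule R M} (hG : G.FG) : G.annihilator ≠ ⊥ := by
  induction G, hG using Submodule.fg_induction with
  | singleton x =>
    obtain ⟨β, hβ, hβx⟩ := h x
    exact (Submodule.ne_bot_iff _).2 ⟨β, (Submodule.mem_annihilator_span_singleton x β).2 hβx, hβ⟩
  | sup N₁ N₂ ih₁ ih₂ =>
    rw [Submodule.annihilator_sup]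
    rcases (PreValuationRing.iff_ideal_total.1 ‹_›).total N₁.annihilator N₂.annihilator with
      hle | hle
    · rwa [inf_eq_left.2 hle]
    · rwa [inf_eq_right.2 hle]

end ChainModules

section Construction

variable {R E : Type u} [CommRing R] [IsLocalRing R] [PreValuationRing R]
  [AddCommGroup E] [Module R E] {δ : R → R}

theorem exists_annOf_eq_bot_of_annOf_eq_span (hE : IsFpInjective R E)
    (hδ : ∀ a, annOf R a = Ideal.span {δ a}) (hR : IsFpInjective R R) {x₀ : E} (hx₀ : x₀ ≠ 0)
    {c : R} (hc : annOf R x₀ = Ideal.span {c}) : ∃ y : E, y ≠ 0 ∧ annOf R y = ⊥ := by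
  rcases eq_or_ne c 0 with rfl | hc0
  · exact ⟨x₀, hx₀, by rw [hc, Ideal.span_singleton_eq_bot]⟩
  obtain ⟨y, hy⟩ :=
    exists_dual_smul_eq hE hδ hR (mem_annOf.1 (hc ▸ Ideal.mem_span_singleton_self c))
  refine ⟨y, by rintro rfl; exact hx₀ (by rw [← hy, smul_zero]),
    (Submodule.eq_bot_iff _).2 fun z hz => ?_⟩
  rw [mem_annOf] at hz
  by_contra hz0
  rcases ValuationRing.dvd_total c (δ z) with ⟨t, ht⟩ | ⟨s, hs⟩
  · obtain ⟨t', ht'⟩ := dvd_of_mul_dual_eq_zero hδ hR (a := z) (z := δ c)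
      (by rw [ht, ← mul_assoc, dual_mul_self hδ, zero_mul])
    exact hx₀ (by rw [← hy, ht', mul_comm, mul_smul, hz, smul_zero])
  · obtain ⟨t', ht'⟩ := dvd_of_mul_dual_eq_zero hδ hR (a := z) (z := s * δ c)
      (by linear_combination -δ c * hs + dual_mul_self hδ c)
    obtain ⟨e, he⟩ : c ∣ s := by
      rw [← Ideal.mem_span_singleton, ← hc, mem_annOf, ← hy, smul_smul, ht', mul_comm, mul_smul,
        hz, smul_zero]
    have hδz : δ z ∈ maximalIdeal R :=
      (mem_maximalIdeal _).2 fun hu => hz0 (eq_zero_of_isUnit_dual hδ hu)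
    exact hc0 (eq_zero_of_eq_mul (Ideal.mul_mem_right e _ hδz)
      (by linear_combination hs + δ z * he))

theorem exists_pure_uniserial_of_annOf_eq_bot (hδ : ∀ a, annOf R a = Ideal.span {δ a})
    (hR : IsFpInjective R R) {y : E} (hy0 : y ≠ 0) (hy : annOf R y = ⊥) :
    ∃ U : Submodule R E, U ≠ ⊥ ∧ IsUniserialSub U ∧ IsPureSubmodule U ∧
      ∀ G : Submodule R E, G.FG → ¬ U ≤ maximalIdeal R • G := by
  have hfaithful : ∀ r : R, r • y = 0 → r = 0 := fun r hr => by
    simpa [hy] using mem_annOf.2 hr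
  refine ⟨R ∙ y, mt Submodule.span_singleton_eq_bot.1 hy0,
    isUniserialSub_of_forall_mem_span_singleton fun u hu v hv => ⟨y, hu, hv⟩,
    isPureSubmodule_of_forall_smul_eq_zero hδ hR fun b z hz hbz => ?_,
    fun G _ hle => ?_⟩
  · obtain ⟨r, rfl⟩ := Submodule.mem_span_singleton.1 hz
    exact ⟨r, hfaithful _ (by rwa [mul_smul]), y, Submodule.mem_span_singleton_self y, rfl⟩
  · obtain ⟨b, hb, e, -, hbe⟩ :=
      exists_eq_smul_of_mem_smul (hle (Submodule.mem_span_singleton_self y))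
    have hδb : δ b = 0 := hfaithful _ (by rw [hbe, smul_smul, dual_mul_self hδ, zero_smul])
    exact (mem_maximalIdeal b).1 hb (isUnit_of_dual_eq_zero hδ hR hδb)

theorem exists_mem_span_singleton_annOf_le (hE : IsFpInjective R E)
    (harch : IsArchimedeanLocal R) (hδ : ∀ a, annOf R a = Ideal.span {δ a})
    (hR : IsFpInjective R R) {d : R} (hd : d ∈ maximalIdeal R) {y : E} (hy0 : y ≠ 0) :
    ∃ y' : E, y ∈ R ∙ y' ∧ annOf R y' ≤ annOf R d := by
  obtain ⟨c, hc, hcd⟩ := harch.exists_mem_forall_dvd_mul hd (annOf R y)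
  obtain ⟨y', hy'⟩ := exists_dual_smul_eq hE hδ hR (mem_annOf.1 hc)
  refine ⟨y', Submodule.mem_span_singleton.2 ⟨δ c, hy'⟩, fun z hz => ?_⟩
  rw [mem_annOf] at hz ⊢
  rcases ValuationRing.dvd_total z (δ c) with ⟨t, ht⟩ | ⟨t, rfl⟩
  · exact absurd (by rw [← hy', ht, mul_comm, mul_smul, hz, smul_zero]) hy0
  · obtain ⟨k, hk⟩ := hcd t (mem_annOf.2 (by rw [← hy', smul_smul, mul_comm, hz]))
    rw [smul_eq_mul]
    linear_combination δ c * hk + k * dual_mul_self hδ c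

theorem exists_seq_eventually_annOf_le (hE : IsFpInjective R E) (harch : IsArchimedeanLocal R)
    (hnoeth : ¬ IsNoetherianRing R) (hδ : ∀ a, annOf R a = Ideal.span {δ a})
    (hR : IsFpInjective R R) [Nontrivial E] :
    ∃ x : ℕ → E, (∀ m, x m ≠ 0) ∧ Monotone (fun m => R ∙ x m) ∧
      ∀ e ∈ maximalIdeal R, ∀ᶠ m in atTop, annOf R (x m) ≤ annOf R e := by
  obtain ⟨d, hd, hdcof⟩ := harch.exists_coinitial_seq hnoeth
  have step (m : ℕ) (y : {y : E // y ≠ 0}) : ∃ y' : {y : E // y ≠ 0},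
      (y : E) ∈ R ∙ (y' : E) ∧ annOf R (y' : E) ≤ annOf R (d m) := by
    obtain ⟨y', hyy', hy'⟩ := exists_mem_span_singleton_annOf_le hE harch hδ hR (hd m).1 y.2
    exact ⟨⟨y', by rintro rfl; exact y.2 (by simpa using hyy')⟩, hyy', hy'⟩
  choose f hf₁ hf₂ using step
  obtain ⟨x₀, hx₀⟩ := exists_ne (0 : E)
  obtain ⟨x, hsucc⟩ : ∃ x : ℕ → {y : E // y ≠ 0}, ∀ m, x (m + 1) = f m (x m) :=
    ⟨fun m => Nat.rec ⟨x₀, hx₀⟩ f m, fun _ => rfl⟩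
  have hmono : Monotone (fun m => R ∙ (x m : E)) := monotone_nat_of_le_succ fun m => by
    rw [Submodule.span_singleton_le_iff_mem, hsucc]
    exact hf₁ m (x m)
  refine ⟨fun m => x m, fun m => (x m).2, hmono, fun e he => ?_⟩
  obtain ⟨j, s, rfl⟩ := hdcof e he
  refine (eventually_ge_atTop (j + 1)).mono fun m hm z hz => ?_
  have hle : R ∙ (x (j + 1) : E) ≤ R ∙ (x m : E) := hmono hm
  obtain ⟨w, hw⟩ := Submodule.mem_span_singleton.1 (hle (Submodule.mem_span_singleton_self _))
  have hz' : z • (x m : E) = 0 := mem_annOf.1 hz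
  have hsz : z * s ∈ annOf R (f j (x j) : E) := by
    rw [mem_annOf, ← hsucc, ← hw, smul_smul, show z * s * w = s * w * z by ring, mul_smul, hz',
      smul_zero]
  have hdsz := mem_annOf.1 (hf₂ j (x j) hsz)
  rw [smul_eq_mul] at hdsz
  rw [mem_annOf, smul_eq_mul]
  linear_combination hdsz

theorem exists_eq_smul_mul_eq_zero (hI : ∀ x : E, x ≠ 0 → ∀ c : R, annOf R x ≠ Ideal.span {c})
    {x : ℕ → E} (hx0 : ∀ m, x m ≠ 0) (hmono : Monotone fun m => R ∙ x m)
    (hann : ∀ e ∈ maximalIdeal R, ∀ᶠ m in atTop, annOf R (x m) ≤ annOf R e)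
    {k : ℕ} {a : R} (ha : a • x k = 0) : ∃ m, ∃ w : R, x k = w • x m ∧ a * w = 0 := by
  have hnle : ¬ annOf R (x k) ≤ Ideal.span {a} := fun hle => hI _ (hx0 k) a
    (le_antisymm hle ((Ideal.span_singleton_le_iff_mem _).2 (mem_annOf.2 ha)))
  obtain ⟨c, hc, hca⟩ := SetLike.not_le_iff_exists.1 hnle
  obtain ⟨q, rfl⟩ : c ∣ a := (ValuationRing.dvd_total a c).resolve_left fun h =>
    hca (Ideal.mem_span_singleton.2 h)
  have hq : q ∈ maximalIdeal R := (mem_maximalIdeal _).2 fun hu =>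
    hca (Ideal.mem_span_singleton.2 (hu.mul_right_dvd.2 dvd_rfl))
  obtain ⟨m, hkm, hm⟩ := ((eventually_ge_atTop k).and (hann q hq)).exists
  have hle : R ∙ x k ≤ R ∙ x m := hmono hkm
  obtain ⟨w, hw⟩ := Submodule.mem_span_singleton.1 (hle (Submodule.mem_span_singleton_self _))
  refine ⟨m, w, hw.symm, ?_⟩
  have hcw := mem_annOf.1 (hm (mem_annOf.2 (by rw [mul_smul, hw]; exact mem_annOf.1 hc :
    (c * w) • x m = 0)))
  rw [smul_eq_mul] at hcw
  linear_combination hcw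

theorem exists_pure_uniserial_of_forall_annOf_ne_span (hE : IsFpInjective R E)
    (harch : IsArchimedeanLocal R) (hnoeth : ¬ IsNoetherianRing R)
    (hδ : ∀ a, annOf R a = Ideal.span {δ a}) (hR : IsFpInjective R R) [Nontrivial E]
    (hI : ∀ x : E, x ≠ 0 → ∀ c : R, annOf R x ≠ Ideal.span {c}) :
    ∃ U : Submodule R E, U ≠ ⊥ ∧ IsUniserialSub U ∧ IsPureSubmodule U ∧
      ∀ G : Submodule R E, G.FG → ¬ U ≤ maximalIdeal R • G := by
  obtain ⟨x, hx0, hmono, hann⟩ := exists_seq_eventually_annOf_le hE harch hnoeth hδ hR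
  have hmem : ∀ z, z ∈ ⨆ m, R ∙ x m ↔ ∃ m, z ∈ R ∙ x m := fun z =>
    Submodule.mem_iSup_of_directed _ hmono.directed_le
  have hxU : ∀ m, x m ∈ ⨆ m, R ∙ x m := fun m =>
    (hmem _).2 ⟨m, Submodule.mem_span_singleton_self _⟩
  refine ⟨⨆ m, R ∙ x m, fun h => hx0 0 (by simpa [h] using hxU 0), ?_, ?_, fun G hG hUG => ?_⟩
  · refine isUniserialSub_of_forall_mem_span_singleton fun u hu v hv => ?_
    obtain ⟨k, hk⟩ := (hmem u).1 hu
    obtain ⟨l, hl⟩ := (hmem v).1 hv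
    exact ⟨x (max k l), hmono (le_max_left k l) hk, hmono (le_max_right k l) hl⟩
  · refine isPureSubmodule_of_forall_smul_eq_zero hδ hR fun b z hz hbz => ?_
    obtain ⟨k, hk⟩ := (hmem z).1 hz
    obtain ⟨r, rfl⟩ := Submodule.mem_span_singleton.1 hk
    obtain ⟨m, w, hw, hbw⟩ :=
      exists_eq_smul_mul_eq_zero hI hx0 hmono hann (a := b * r) (by rwa [mul_smul])
    exact ⟨r * w, by rw [← mul_assoc, hbw], x m, hxU m, by rw [hw, smul_smul]⟩
  · have htorsion (y : E) : ∃ β : R, β ≠ 0 ∧ β • y = 0 := by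
      rcases eq_or_ne y 0 with rfl | hy
      · exact ⟨1, one_ne_zero, smul_zero 1⟩
      · obtain ⟨β, hβ, hβ0⟩ := Submodule.exists_mem_ne_zero_of_ne_bot (by simpa using hI y hy 0)
        exact ⟨β, hβ0, mem_annOf.1 hβ⟩
    obtain ⟨β, hβ, hβ0⟩ :=
      Submodule.exists_mem_ne_zero_of_ne_bot (annihilator_ne_bot_of_fg htorsion hG)
    refine hβ0 (eq_zero_of_forall_mem_maximalIdeal_mul_eq_zero harch hnoeth hδ fun e he => ?_)
    obtain ⟨m, hm⟩ := (hann e he).exists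
    exact mem_annOf.1 (hm (mem_annOf.2
      (Submodule.mem_annihilator.1 hβ _ (Submodule.smul_le_right (hUG (hxU m))))))

end Construction

theorem stmt7 (R : Type u) [CommRing R] [IsLocalRing R]
    (hchain : IsChainRing R) (harch : IsArchimedeanLocal R)
    (hnoeth : ¬ IsNoetherianRing R) (hIF : IsIFRing R)
    (E : Type u) [AddCommGroup E] [Module R E] [Nontrivial E]
    (hE : IsFpInjective R E) (n : ℕ)
    (hn : ∀ N : Submodule R E, N.FG → mu R ↥N ≤ n) :
    ∃ U : Submodule R E, U ≠ ⊥ ∧ IsUniserialSub U ∧ IsPureSubmodule U ∧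
      ∀ N : Submodule R (E ⧸ U), N.FG → mu R ↥N ≤ n - 1 := by
  have := hchain.preValuationRing
  obtain ⟨δ, hδ⟩ := exists_annOf_eq_span hIF.1
  obtain ⟨U, hU0, hUuni, hUpure, hUfg⟩ : ∃ U : Submodule R E, U ≠ ⊥ ∧ IsUniserialSub U ∧
      IsPureSubmodule U ∧ ∀ G : Submodule R E, G.FG → ¬ U ≤ maximalIdeal R • G := by
    by_cases h : ∃ y : E, y ≠ 0 ∧ annOf R y = ⊥
    · obtain ⟨y, hy0, hy⟩ := h
      exact exists_pure_uniserial_of_annOf_eq_bot hδ hIF.2 hy0 hy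
    · exact exists_pure_uniserial_of_forall_annOf_ne_span hE harch hnoeth hδ hIF.2
        fun x hx c hc => h (exists_annOf_eq_bot_of_annOf_eq_span hE hδ hIF.2 hx hc)
  exact ⟨U, hU0, hUuni, hUpure, mu_quotient_le_sub_one hn hUfg⟩
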